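/- arXiv:2006.03970 — 3 statements merged into one kernel-verified Lean document; each statement's English description precedes it below -/
import Mathlib

section
/- The Elastic Net proximal operator equals the composition of the prox of the squared-ℓ₂ part with soft-thresholding: for all x ∈ ℝ, prox_{σ(λ₁|·| + (λ₂/2)(·)²)}(x) = (1/(1+σλ₂)) · S_{σλ₁}(x), where S_{σλ₁} is the soft-thresholding operator S_{σλ₁}(x) = sign(x)·max(|x| − σλ₁, 0). -/
/-- The Elastic Net prox is the composition of the prox of the squared-ℓ₂ part with
soft-thresholding: `tstar = S_{σλ₁}(x)/(1+σλ₂)` minimizes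
`t ↦ σ(λ₁|t| + (λ₂/2)t²) ... `, i.e. `λ₁|t| + (λ₂/2)t² + (1/(2σ))(t-x)²`, uniquely. -/
theorem elastic_net_prox_eq_scaled_soft_thresholding (lam1 lam2 sigma : ℝ)
    (hl1 : 0 < lam1) (hl2 : 0 < lam2) (hs : 0 < sigma) (x : ℝ) :
    let tstar : ℝ := (1 / (1 + sigma * lam2)) * (Real.sign x * max (|x| - sigma * lam1) 0)
    (∀ t : ℝ, lam1 * |tstar| + lam2 / 2 * tstar ^ 2 + 1 / (2 * sigma) * (tstar - x) ^ 2 ≤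
        lam1 * |t| + lam2 / 2 * t ^ 2 + 1 / (2 * sigma) * (t - x) ^ 2) ∧
    (∀ t : ℝ, (∀ u : ℝ, lam1 * |t| + lam2 / 2 * t ^ 2 + 1 / (2 * sigma) * (t - x) ^ 2 ≤
        lam1 * |u| + lam2 / 2 * u ^ 2 + 1 / (2 * sigma) * (u - x) ^ 2) → t = tstar) := by
  intro tstar
  have hD : 0 < 1 + sigma * lam2 := by positivity
  have hDne : (1 + sigma * lam2) ≠ 0 := ne_of_gt hD
  have hsl : 0 < sigma * lam1 := by positivity
  -- subgradient facts for s' = x - (1+σλ₂)·tstar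
  have hsub : |x - (1 + sigma * lam2) * tstar| ≤ sigma * lam1 ∧
      (x - (1 + sigma * lam2) * tstar) * tstar = sigma * lam1 * |tstar| := by
    rcases lt_or_ge x (-(sigma * lam1)) with hx | hx
    · have hxneg : x < 0 := by linarith
      have hsign : Real.sign x = -1 := Real.sign_of_neg hxneg
      have habs : |x| = -x := abs_of_neg hxneg
      have hmax : max (|x| - sigma * lam1) 0 = -x - sigma * lam1 := by
        rw [habs]; apply max_eq_left; linarith
      have hts : tstar = (x + sigma * lam1) / (1 + sigma * lam2) := by
        simp only [tstar, hsign, hmax]; field_simp; ring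
      have htneg : tstar < 0 := by
        rw [hts]; apply div_neg_of_neg_of_pos _ hD; linarith
      have habt : |tstar| = -tstar := abs_of_neg htneg
      have hsval : x - (1 + sigma * lam2) * tstar = -(sigma * lam1) := by
        rw [hts]; field_simp; ring
      rw [hsval, habt]
      constructor
      · rw [abs_neg, abs_of_pos hsl]
      · ring
    · rcases lt_or_ge (sigma * lam1) x with hx2 | hx2
      · have hxpos : 0 < x := by linarith
        have hsign : Real.sign x = 1 := Real.sign_of_pos hxpos
        have habs : |x| = x := abs_of_pos hxpos
        have hmax : max (|x| - sigma * lam1) 0 = x - sigma * lam1 := by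
          rw [habs]; apply max_eq_left; linarith
        have hts : tstar = (x - sigma * lam1) / (1 + sigma * lam2) := by
          simp only [tstar, hsign, hmax]; field_simp
        have htpos : 0 < tstar := by
          rw [hts]; apply div_pos _ hD; linarith
        have habt : |tstar| = tstar := abs_of_pos htpos
        have hsval : x - (1 + sigma * lam2) * tstar = sigma * lam1 := by
          rw [hts]; field_simp; ring
        rw [hsval, habt]
        constructor
        · rw [abs_of_pos hsl]
        · ring
      · -- |x| ≤ σλ₁
        have habsle : |x| ≤ sigma * lam1 := abs_le.mpr ⟨hx, hx2⟩
        have hmax : max (|x| - sigma * lam1) 0 = 0 := max_eq_right (by linarith)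
        have hts : tstar = 0 := by simp [tstar, hmax]
        rw [hts]
        simp [habsle]
  obtain ⟨h1, h2⟩ := hsub
  have key : ∀ t : ℝ,
      lam1 * |tstar| + lam2 / 2 * tstar ^ 2 + 1 / (2 * sigma) * (tstar - x) ^ 2
        + (1 + sigma * lam2) / (2 * sigma) * (t - tstar) ^ 2 ≤
      lam1 * |t| + lam2 / 2 * t ^ 2 + 1 / (2 * sigma) * (t - x) ^ 2 := by
    intro t
    have hst : (x - (1 + sigma * lam2) * tstar) * t ≤ sigma * lam1 * |t| := by
      calc (x - (1 + sigma * lam2) * tstar) * t ≤ |(x - (1 + sigma * lam2) * tstar) * t| :=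
            le_abs_self _
        _ = |x - (1 + sigma * lam2) * tstar| * |t| := abs_mul _ _
        _ ≤ sigma * lam1 * |t| := mul_le_mul_of_nonneg_right h1 (abs_nonneg t)
    rw [← sub_nonneg]
    have hexp : lam1 * |t| + lam2 / 2 * t ^ 2 + 1 / (2 * sigma) * (t - x) ^ 2
        - (lam1 * |tstar| + lam2 / 2 * tstar ^ 2 + 1 / (2 * sigma) * (tstar - x) ^ 2
          + (1 + sigma * lam2) / (2 * sigma) * (t - tstar) ^ 2)
        = (1 / (2 * sigma)) * (2 * (sigma * lam1 * |t|) - 2 * (sigma * lam1 * |tstar|)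
            - 2 * ((x - (1 + sigma * lam2) * tstar) * (t - tstar))) := by
      field_simp
      ring
    rw [hexp]
    apply mul_nonneg (by positivity)
    nlinarith [hst, h2]
  constructor
  · intro t
    have hq : 0 ≤ (1 + sigma * lam2) / (2 * sigma) * (t - tstar) ^ 2 := by positivity
    linarith [key t, hq]
  · intro t ht
    have h3 := ht tstar
    have h4 := key t
    have h5 : (1 + sigma * lam2) / (2 * sigma) * (t - tstar) ^ 2 ≤ 0 := by linarith
    have h6 : (t - tstar) ^ 2 = 0 := by
      have hc : 0 < (1 + sigma * lam2) / (2 * sigma) := div_pos hD (by positivity)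
      nlinarith [sq_nonneg (t - tstar)]
    have h7 : t - tstar = 0 := by
      exact pow_eq_zero_iff (by norm_num) |>.mp h6
    linarith
end

section
/- For the Elastic Net, the conjugate evaluated at the prox of the conjugate satisfies: for all t ∈ ℝ and σ > 0, p*( prox_{p*/σ}(t/σ) ) = (λ₂/2)·( prox_{σp}(t) )², where prox_{σp}(t) = (1/(1+σλ₂))·sign(t)·max(|t|−σλ₁,0) and prox_{p*/σ}(t/σ) equals (tλ₂+λ₁)/(1+σλ₂) if t ≥ σλ₁, t/σ if |t| < σλ₁, and (tλ₂−λ₁)/(1+σλ₂) if t ≤ −σλ₁. -/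
/-- 1-d Elastic Net conjugate. -/
noncomputable def enConj (lam1 lam2 : ℝ) (z : ℝ) : ℝ :=
  if lam1 ≤ z then (z - lam1) ^ 2 / (2 * lam2)
  else if z ≤ -lam1 then (z + lam1) ^ 2 / (2 * lam2)
  else 0

/-- For the Elastic Net, `p*(prox_{p*/σ}(t/σ)) = (λ₂/2)(prox_{σp}(t))²`. -/
theorem elastic_net_conj_of_prox_conj (lam1 lam2 sigma : ℝ)
    (hl1 : 0 < lam1) (hl2 : 0 < lam2) (hs : 0 < sigma) (t : ℝ) :
    enConj lam1 lam2
        (if sigma * lam1 ≤ t then (t * lam2 + lam1) / (1 + sigma * lam2)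
         else if t ≤ -(sigma * lam1) then (t * lam2 - lam1) / (1 + sigma * lam2)
         else t / sigma)
      = lam2 / 2 *
          ((1 / (1 + sigma * lam2)) * (Real.sign t * max (|t| - sigma * lam1) 0)) ^ 2 := by
  have hden : (0:ℝ) < 1 + sigma * lam2 := by positivity
  have hsl : (0:ℝ) < sigma * lam1 := by positivity
  by_cases h1 : sigma * lam1 ≤ t
  · rw [if_pos h1]
    have ht : 0 < t := lt_of_lt_of_le hsl h1
    have hz : lam1 ≤ (t * lam2 + lam1) / (1 + sigma * lam2) := by
      rw [le_div_iff₀ hden]; nlinarith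
    unfold enConj
    rw [if_pos hz, Real.sign_of_pos ht, abs_of_pos ht, max_eq_left (by linarith)]
    field_simp
    ring
  · rw [if_neg h1]
    push_neg at h1
    by_cases h2 : t ≤ -(sigma * lam1)
    · rw [if_pos h2]
      have ht : t < 0 := lt_of_le_of_lt h2 (by linarith)
      have hz2 : (t * lam2 - lam1) / (1 + sigma * lam2) ≤ -lam1 := by
        rw [div_le_iff₀ hden]; nlinarith
      have hz1 : ¬ lam1 ≤ (t * lam2 - lam1) / (1 + sigma * lam2) := by
        push_neg; linarith
      unfold enConj
      rw [if_neg hz1, if_pos hz2, Real.sign_of_neg ht, abs_of_neg ht,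
        max_eq_left (by linarith)]
      field_simp
      ring
    · rw [if_neg h2]
      push_neg at h2
      have hz1 : ¬ lam1 ≤ t / sigma := by
        push_neg; rw [div_lt_iff₀ hs]; nlinarith
      have hz2 : ¬ t / sigma ≤ -lam1 := by
        push_neg; rw [lt_div_iff₀ hs]; nlinarith
      unfold enConj
      rw [if_neg hz1, if_neg hz2,
        max_eq_right (by cases abs_cases t with
          | inl h => linarith [h.1]
          | inr h => linarith [h.1])]
      simp
end

section
/- For the one-dimensional Elastic Net, the function ψ(y) identity holds: for all y ∈ ℝᵐ, x ∈ ℝⁿ, σ > 0, with z̄ = prox_{p*/σ}(x/σ − Aᵀy) one has h*(y) + p*(z̄) − xᵀ(Aᵀy + z̄) + (σ/2)‖Aᵀy + z̄‖₂² = h*(y) + ((1+σλ₂)/(2σ))‖prox_{σp}(x − σAᵀy)‖₂² − (1/(2σ))‖x‖₂². -/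
open Matrix

lemma elastic_net_coord (lam1 lam2 sigma xr w : ℝ)
    (hl1 : 0 < lam1) (hl2 : 0 < lam2) (hs : 0 < sigma) :
    let t : ℝ := xr - sigma * w
    let z : ℝ :=
      if sigma * lam1 ≤ t then (t * lam2 + lam1) / (1 + sigma * lam2)
      else if t ≤ -(sigma * lam1) then (t * lam2 - lam1) / (1 + sigma * lam2)
      else t / sigma
    let p : ℝ := (1 / (1 + sigma * lam2)) * (Real.sign t * max (|t| - sigma * lam1) 0)
    (1 / (2 * lam2)) *
        (if lam1 ≤ z then (z - lam1) ^ 2 else if z ≤ -lam1 then (z + lam1) ^ 2 else 0)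
      - xr * (w + z) + sigma / 2 * (w + z) ^ 2
    = (1 + sigma * lam2) / (2 * sigma) * p ^ 2 - 1 / (2 * sigma) * xr ^ 2 := by
  intro t z p
  have hd : (0:ℝ) < 1 + sigma * lam2 := by nlinarith
  have hsl : (0:ℝ) < sigma * lam1 := by positivity
  by_cases h1 : sigma * lam1 ≤ t
  · have ht : 0 < t := lt_of_lt_of_le hsl h1
    have hz : z = (t * lam2 + lam1) / (1 + sigma * lam2) := if_pos h1
    have hp : p = (1 / (1 + sigma * lam2)) * (t - sigma * lam1) := by
      simp only [p, Real.sign_of_pos ht, abs_of_pos ht,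
        max_eq_left (sub_nonneg.mpr h1), one_mul]
    have hzge : lam1 ≤ z := by
      rw [hz, le_div_iff₀ hd]
      nlinarith
    rw [if_pos hzge, hz, hp]
    have hw : w = (xr - t) / sigma := by
      simp only [t]; field_simp; ring
    rw [hw]
    field_simp
    ring
  · by_cases h2 : t ≤ -(sigma * lam1)
    · have ht : t < 0 := lt_of_le_of_lt h2 (by linarith)
      have hz : z = (t * lam2 - lam1) / (1 + sigma * lam2) := by
        simp only [z, if_neg h1, if_pos h2]
      have hp : p = (1 / (1 + sigma * lam2)) * (-(- t - sigma * lam1)) := by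
        simp only [p, Real.sign_of_neg ht, abs_of_neg ht,
          max_eq_left (by linarith : (0:ℝ) ≤ -t - sigma * lam1)]
        ring
      have hzle : z ≤ -lam1 := by
        rw [hz, div_le_iff₀ hd]
        nlinarith
      have hzlt : ¬ lam1 ≤ z := by
        intro h; nlinarith
      rw [if_neg hzlt, if_pos hzle, hz, hp]
      have hw : w = (xr - t) / sigma := by
        simp only [t]; field_simp; ring
      rw [hw]
      field_simp
      ring
    · push_neg at h1 h2
      have habs : |t| < sigma * lam1 := abs_lt.mpr ⟨by linarith, h1⟩
      have hz : z = t / sigma := by simp only [z, if_neg (not_le.mpr h1),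
        if_neg (not_le.mpr (by linarith : -(sigma * lam1) < t))]
      have hp : p = 0 := by
        simp only [p, max_eq_right (by linarith : |t| - sigma * lam1 ≤ 0), mul_zero]
      have hz1 : ¬ lam1 ≤ z := by
        rw [hz]; rw [not_le, div_lt_iff₀ hs]
        calc t ≤ |t| := le_abs_self t
        _ < sigma * lam1 := habs
        _ = lam1 * sigma := by ring
      have hz2 : ¬ z ≤ -lam1 := by
        rw [hz]; rw [not_le, lt_div_iff₀ hs]
        have := neg_abs_le t
        nlinarith [abs_lt.mp habs]
      rw [if_neg hz1, if_neg hz2, hz, hp]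
      have hw : w = (xr - t) / sigma := by
        simp only [t]; field_simp; ring
      rw [hw]
      field_simp
      ring

/-- The identity defining `ψ(y)` for the Elastic Net (Proposition 2, part 1):
with `z̄ = prox_{p*/σ}(x/σ − Aᵀy)`,
`h*(y) + p*(z̄) − xᵀ(Aᵀy + z̄) + (σ/2)‖Aᵀy + z̄‖² =
 h*(y) + ((1+σλ₂)/(2σ))‖prox_{σp}(x − σAᵀy)‖² − (1/(2σ))‖x‖²`. -/
theorem elastic_net_psi_identity (m n : ℕ) (A : Matrix (Fin m) (Fin n) ℝ)
    (b : Fin m → ℝ) (lam1 lam2 sigma : ℝ)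
    (hl1 : 0 < lam1) (hl2 : 0 < lam2) (hs : 0 < sigma)
    (y : Fin m → ℝ) (x : Fin n → ℝ) :
    let t : Fin n → ℝ := fun i => x i - sigma * (Aᵀ.mulVec y) i
    let zbar : Fin n → ℝ := fun i =>
      if sigma * lam1 ≤ t i then (t i * lam2 + lam1) / (1 + sigma * lam2)
      else if t i ≤ -(sigma * lam1) then (t i * lam2 - lam1) / (1 + sigma * lam2)
      else t i / sigma
    let prox : Fin n → ℝ := fun i =>
      (1 / (1 + sigma * lam2)) * (Real.sign (t i) * max (|t i| - sigma * lam1) 0)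
    let hstar : ℝ := (1 / 2) * ∑ j, (y j) ^ 2 + ∑ j, b j * y j
    let pstar : ℝ := (1 / (2 * lam2)) * ∑ i,
      if lam1 ≤ zbar i then (zbar i - lam1) ^ 2
      else if zbar i ≤ -lam1 then (zbar i + lam1) ^ 2
      else 0
    hstar + pstar - (∑ i, x i * ((Aᵀ.mulVec y) i + zbar i))
        + sigma / 2 * ∑ i, ((Aᵀ.mulVec y) i + zbar i) ^ 2 =
      hstar + (1 + sigma * lam2) / (2 * sigma) * ∑ i, (prox i) ^ 2
        - 1 / (2 * sigma) * ∑ i, (x i) ^ 2 := by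
  intro t zbar prox hstar pstar
  have key : ∀ i : Fin n,
      (1 / (2 * lam2)) *
          (if lam1 ≤ zbar i then (zbar i - lam1) ^ 2
            else if zbar i ≤ -lam1 then (zbar i + lam1) ^ 2 else 0)
        - x i * ((Aᵀ.mulVec y) i + zbar i)
        + sigma / 2 * ((Aᵀ.mulVec y) i + zbar i) ^ 2
      = (1 + sigma * lam2) / (2 * sigma) * (prox i) ^ 2
        - 1 / (2 * sigma) * (x i) ^ 2 := fun i =>
    elastic_net_coord lam1 lam2 sigma (x i) ((Aᵀ.mulVec y) i) hl1 hl2 hs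
  have hsum : ∑ i, ((1 / (2 * lam2)) *
          (if lam1 ≤ zbar i then (zbar i - lam1) ^ 2
            else if zbar i ≤ -lam1 then (zbar i + lam1) ^ 2 else 0)
        - x i * ((Aᵀ.mulVec y) i + zbar i)
        + sigma / 2 * ((Aᵀ.mulVec y) i + zbar i) ^ 2)
      = ∑ i, ((1 + sigma * lam2) / (2 * sigma) * (prox i) ^ 2
        - 1 / (2 * sigma) * (x i) ^ 2) :=
    Finset.sum_congr rfl fun i _ => key i
  simp only [Finset.sum_add_distrib, Finset.sum_sub_distrib, ← Finset.mul_sum] at hsum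
  simp only [pstar]
  linarith [hsum]
end
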